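/- arXiv:0910.3879 — 5 statements merged into one kernel-verified Lean document; each statement's English description precedes it below -/
import Mathlib

section
/- Let Γ be a finite abelian group and let l = lcm{ord(g) : g ∈ Γ} be the least common multiple of the orders of its elements (equivalently, the exponent of Γ). If m ≥ 1 and k ≥ 1 are integers with m ≡ k (mod l), then the number of group homomorphisms from Γ to ℤ/mℤ equals the number of group homomorphisms from Γ to ℤ/kℤ. -/
/-!
A homomorphism from `Γ` lands in the `l`-torsion of the target, since `l • g = 0` on `Γ`. The
`l`-torsion of `ℤ/mℤ` is cyclic of order `gcd m l`, and `gcd m l = gcd k l` when `m ≡ k [MOD l]`,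
so the `l`-torsion subgroups of `ℤ/mℤ` and `ℤ/kℤ` are isomorphic.
-/

section

variable {Γ A B : Type*} [AddCommGroup Γ] [AddCommGroup A] [AddCommGroup B]

def addMonoidHomEquivKerNsmul {n : ℕ} (hΓ : ∀ g : Γ, n • g = 0) :
    (Γ →+ A) ≃ (Γ →+ (nsmulAddMonoidHom n : A →+ A).ker) where
  toFun φ := φ.codRestrict _ fun g => by simp [← map_nsmul, hΓ]
  invFun ψ := (AddSubgroup.subtype _).comp ψ
  left_inv _ := rfl
  right_inv _ := rfl

theorem card_addMonoidHom_eq_of_gcd_card_eq [IsAddCyclic A] [IsAddCyclic B] [Finite A] [Finite B]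
    {n : ℕ} (hΓ : ∀ g : Γ, n • g = 0) (h : (Nat.card A).gcd n = (Nat.card B).gcd n) :
    Nat.card (Γ →+ A) = Nat.card (Γ →+ B) := by
  have e : (nsmulAddMonoidHom n : A →+ A).ker ≃+ (nsmulAddMonoidHom n : B →+ B).ker :=
    addEquivOfAddCyclicCardEq <| by
      rw [IsAddCyclic.card_nsmulAddMonoidHom_ker, IsAddCyclic.card_nsmulAddMonoidHom_ker, h]
  exact Nat.card_congr <| (addMonoidHomEquivKerNsmul hΓ).trans <|
    (AddEquiv.addMonoidHomCongrRightEquiv e).trans (addMonoidHomEquivKerNsmul hΓ).symm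

end

theorem stmt_2_general (Γ : Type*) [AddCommGroup Γ]
    (l : ℕ) (hl : l = AddMonoid.exponent Γ)
    (m k : ℕ) (hm : 1 ≤ m) (hk : 1 ≤ k) (hmk : m ≡ k [MOD l]) :
    Nat.card (Γ →+ ZMod m) = Nat.card (Γ →+ ZMod k) := by
  have : NeZero m := ⟨by omega⟩
  have : NeZero k := ⟨by omega⟩
  refine card_addMonoidHom_eq_of_gcd_card_eq (n := l)
    (fun g => hl ▸ AddMonoid.exponent_nsmul_eq_zero g) ?_
  rw [Nat.card_zmod, Nat.card_zmod, hmk.gcd_eq]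

/-- If `Γ` is a finite abelian group of exponent `l` and `m, k ≥ 1` with
`m ≡ k (mod l)`, then the number of homomorphisms `Γ → ℤ/mℤ` equals the number
of homomorphisms `Γ → ℤ/kℤ`. -/
theorem stmt_2 (Γ : Type*) [AddCommGroup Γ] [Finite Γ]
    (l : ℕ) (hl : l = AddMonoid.exponent Γ)
    (m k : ℕ) (hm : 1 ≤ m) (hk : 1 ≤ k) (hmk : m ≡ k [MOD l]) :
    Nat.card (Γ →+ ZMod m) = Nat.card (Γ →+ ZMod k) :=
  stmt_2_general Γ l hl m k hm hk hmk
end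

section
/- Let A = ∏_{j=1}^k ℤ/n_jℤ with each n_j ≥ 1, and let L = lcm(n_1, n_2, …, n_k). Then ∑_{a ∈ A} 1/ord(a) = (1/L) · ∑_{l=1}^{L} gcd(l, n_1) · gcd(l, n_2) ⋯ gcd(l, n_k), as an equality of rational numbers. -/
/-!
Double counting of the pairs `(a, l)` with `1 ≤ l ≤ L` and `l • a = 0`, where `L` is the exponent
of `A`: an element `a` is killed by exactly `L / ord a` of these `l`, while `l` kills
`∏ j, gcd(l, n_j)` elements, since in the cyclic group `ℤ/nℤ` the kernel of `x ↦ l • x` has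
`gcd(n, l)` elements.
-/

open Finset

lemma card_Icc_filter_nsmul_eq_zero {A : Type*} [AddMonoid A] [DecidableEq A] (a : A) (n : ℕ) :
    #{l ∈ Icc 1 n | l • a = 0} = n / addOrderOf a := by
  simp_rw [← addOrderOf_dvd_iff_nsmul_eq_zero, ← Nat.Ioc_filter_dvd_card_eq_div,
    ← Icc_add_one_left_eq_Ioc, zero_add]

theorem sum_one_div_addOrderOf_eq {A : Type*} [AddLeftCancelMonoid A] [Fintype A] :
    ∑ a : A, (1 : ℚ) / addOrderOf a =
      1 / AddMonoid.exponent A *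
        ∑ l ∈ Icc 1 (AddMonoid.exponent A), (Nat.card {a : A // l • a = 0} : ℚ) := by
  -- `classical` would decide `l • a = 0` by a different instance than the lemma above
  let := Classical.decEq A
  have hcount (a : A) : (1 : ℚ) / addOrderOf a =
      1 / AddMonoid.exponent A * #{l ∈ Icc 1 (AddMonoid.exponent A) | l • a = 0} := by
    rw [card_Icc_filter_nsmul_eq_zero, Nat.cast_div (AddMonoid.addOrder_dvd_exponent a)
      (Nat.cast_ne_zero.mpr (addOrderOf_pos a).ne')]
    have : (AddMonoid.exponent A : ℚ) ≠ 0 :=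
      Nat.cast_ne_zero.mpr AddMonoid.exponent_ne_zero_of_finite
    field_simp
  simp_rw [hcount, ← mul_sum, Nat.card_eq_fintype_card, Fintype.card_subtype]
  congr 1
  exact_mod_cast sum_card_bipartiteAbove_eq_sum_card_bipartiteBelow (s := univ)
    (t := Icc 1 (AddMonoid.exponent A)) (fun (a : A) (l : ℕ) => l • a = 0)

lemma card_pi_nsmul_eq_zero {ι : Type*} [Fintype ι] {G : ι → Type*} [∀ i, AddMonoid (G i)]
    (l : ℕ) :
    Nat.card {f : ∀ i, G i // l • f = 0} = ∏ i, Nat.card {x : G i // l • x = 0} := by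
  rw [← Nat.card_pi]
  exact Nat.card_congr <|
    (Equiv.subtypeEquivRight fun _ => by simp [funext_iff]).trans Equiv.subtypePiEquivPi

lemma AddEquiv.card_nsmul_eq_zero_congr {A B : Type*} [AddMonoid A] [AddMonoid B] (e : A ≃+ B)
    (l : ℕ) :
    Nat.card {a : A // l • a = 0} = Nat.card {b : B // l • b = 0} :=
  Nat.card_congr <| e.toEquiv.subtypeEquiv fun _ => by simp [← map_nsmul]

lemma ZMod.card_nsmul_eq_zero (n : ℕ) [NeZero n] (l : ℕ) :
    Nat.card {x : ZMod n // l • x = 0} = n.gcd l := by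
  conv_rhs => rw [← Nat.card_zmod n]
  exact IsAddCyclic.card_nsmulAddMonoidHom_ker (ZMod n) l

/-- For `A = ∏_{j=1}^k ℤ/n_jℤ` with each `n_j ≥ 1` and
`L = lcm(n_1, …, n_k)`, one has
`∑_{a ∈ A} 1/ord(a) = (1/L) · ∑_{l=1}^{L} ∏_j gcd(l, n_j)` in `ℚ`. -/
theorem stmt_4 (k : ℕ) (n : Fin k → ℕ) (hn : ∀ j, 1 ≤ n j)
    (A : Type*) [AddCommGroup A] [Fintype A] (e : A ≃+ ∀ j, ZMod (n j))
    (L : ℕ) (hL : L = Finset.univ.lcm n) :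
    (∑ a : A, (1 : ℚ) / (addOrderOf a)) =
      (1 / (L : ℚ)) * ∑ l ∈ Finset.Icc 1 L, ∏ j, (Nat.gcd l (n j) : ℚ) := by
  have hexp : AddMonoid.exponent A = L := by
    rw [AddMonoid.exponent_eq_of_addEquiv e, AddMonoid.exponent_pi, hL]
    simp only [ZMod.exponent]
  have (j : Fin k) : NeZero (n j) := NeZero.of_pos (hn j)
  rw [sum_one_div_addOrderOf_eq, hexp]
  congr 1
  refine sum_congr rfl fun l _ => ?_
  rw [e.card_nsmul_eq_zero_congr, card_pi_nsmul_eq_zero]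
  push_cast
  simp only [ZMod.card_nsmul_eq_zero, Nat.gcd_comm]
end

section
/- Let Γ be a finite abelian group with exponent l (the least common multiple of the orders of its elements), write G(m) := |Hom(Γ, ℤ/mℤ)| for m ≥ 1, let n ≥ 0 and r ≥ 1 be natural numbers, let w be a complex number, and let s_1, …, s_r be complex numbers with Re(s_i − n·w) > 1 for all i. Then ∑_{m_1, …, m_r ≥ 1} |Hom(ℤ^n × Γ, ℤ/(m_1⋯m_r)ℤ)|^w · ∏_{i=1}^r m_i^{-s_i} = ∑_{k_1, …, k_r = 1}^{l} G(k_1⋯k_r)^w · ∏_{i=1}^r ( l^{-(s_i − n w)} · ∑_{n' ≥ 0} (n' + k_i/l)^{-(s_i − n w)} ), where |Hom(ℤ^n × Γ, ℤ/Mℤ)|^w and G(k)^w denote complex powers of positive integers, and the left side is a convergent tsum over r-tuples of positive integers. -/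
open Complex Finset

/-! Since `Hom(ℤⁿ × Γ, ℤ/M) ≃ (ℤ/M)ⁿ × Hom(Γ, ℤ/M)`, the summand equals
`G(M)^w ∏ mᵢ^{-(sᵢ - n w)}` with `M = ∏ mᵢ`. Every homomorphism `Γ → ℤ/M` lands in the
`l`-torsion of `ℤ/M`, a cyclic group of order `gcd(l, M)`, so `G(M)` only depends on `M mod l`.
Writing `mᵢ = l aᵢ + kᵢ` with `1 ≤ kᵢ ≤ l` therefore splits the sum into finitely many residue
classes, on each of which it factors into Hurwitz series
`∑ₐ (l a + kᵢ)^{-tᵢ} = l^{-tᵢ} ∑ₐ (a + kᵢ/l)^{-tᵢ}`, absolutely convergent for `Re tᵢ > 1`. -/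

lemma Nat.card_addMonoidHom_pi_int_prod (n : ℕ) (Γ A : Type*) [AddCommGroup Γ]
    [AddCommGroup A] :
    Nat.card ((Fin n → ℤ) × Γ →+ A) = Nat.card A ^ n * Nat.card (Γ →+ A) := by
  rw [Nat.card_congr ((addMonoidHomLequivInt ℤ).toEquiv.trans
      ((LinearMap.coprodEquiv ℤ).symm.toEquiv.trans
        (((LinearEquiv.piRing ℤ A (Fin n) ℤ).toEquiv).prodCongr
          (addMonoidHomLequivInt ℤ).symm.toEquiv))),
    Nat.card_prod, Nat.card_pi, prod_const, Finset.card_univ, Fintype.card_fin]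

noncomputable def AddMonoidHom.codRestrictKerNsmulEquiv (Γ A : Type*) [AddCommGroup Γ]
    [AddCommGroup A] :
    (Γ →+ A) ≃ (Γ →+ (nsmulAddMonoidHom (AddMonoid.exponent Γ) : A →+ A).ker) where
  toFun f := f.codRestrict _ fun x => by
    simp [AddMonoidHom.mem_ker, ← map_nsmul, AddMonoid.exponent_nsmul_eq_zero]
  invFun f := (AddSubgroup.subtype _).comp f
  left_inv _ := rfl
  right_inv _ := rfl

lemma Nat.card_addMonoidHom_zmod_eq_of_modEq (Γ : Type*) [AddCommGroup Γ] {a b : ℕ}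
    (ha : a ≠ 0) (hb : b ≠ 0) (hab : a ≡ b [MOD AddMonoid.exponent Γ]) :
    Nat.card (Γ →+ ZMod a) = Nat.card (Γ →+ ZMod b) := by
  have : NeZero a := ⟨ha⟩
  have : NeZero b := ⟨hb⟩
  set l := AddMonoid.exponent Γ
  have hcard : Nat.card (nsmulAddMonoidHom l : ZMod a →+ ZMod a).ker =
      Nat.card (nsmulAddMonoidHom l : ZMod b →+ ZMod b).ker := by
    rw [IsAddCyclic.card_nsmulAddMonoidHom_ker, IsAddCyclic.card_nsmulAddMonoidHom_ker,
      Nat.card_zmod, Nat.card_zmod, Nat.gcd_comm, Nat.gcd_rec, hab, ← Nat.gcd_rec, Nat.gcd_comm]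
  rw [Nat.card_congr (AddMonoidHom.codRestrictKerNsmulEquiv Γ (ZMod a)),
    Nat.card_congr (AddMonoidHom.codRestrictKerNsmulEquiv Γ (ZMod b))]
  exact Nat.card_congr (AddEquiv.addMonoidHomCongrRightEquiv (addEquivOfAddCyclicCardEq hcard))

lemma natCast_prod_cpow {ι : Type*} (s : Finset ι) (m : ι → ℕ) (z : ℂ) :
    ((∏ i ∈ s, m i : ℕ) : ℂ) ^ z = ∏ i ∈ s, (m i : ℂ) ^ z :=
  map_prod ({ toFun := fun k : ℕ => (k : ℂ) ^ z
              map_one' := by simp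
              map_mul' := fun a b => by push_cast; exact natCast_mul_natCast_cpow a b z } : ℕ →* ℂ)
    m s

lemma natCast_prod_pow_mul_cpow_mul_prod_cpow_neg {ι : Type*} [Fintype ι] {m : ι → ℕ}
    (hm : ∀ i, m i ≠ 0) (n c : ℕ) (w : ℂ) (s : ι → ℂ) :
    (((∏ i, m i) ^ n * c : ℕ) : ℂ) ^ w * ∏ i, (m i : ℂ) ^ (-s i) =
      (c : ℂ) ^ w * ∏ i, (m i : ℂ) ^ (-(s i - n * w)) := by
  rw [Nat.cast_mul, natCast_mul_natCast_cpow, Nat.cast_pow, ← natCast_cpow_natCast_mul,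
    natCast_prod_cpow, mul_right_comm, ← prod_mul_distrib, mul_comm]
  congr 1
  refine prod_congr rfl fun i _ => ?_
  rw [← cpow_add _ _ (Nat.cast_ne_zero.mpr (hm i))]
  ring_nf

lemma summable_norm_prod_and_tsum_prod {R β : Type*} [NormedCommRing R] [CompleteSpace R] :
    ∀ {r : ℕ} (f : Fin r → β → R), (∀ i, Summable fun b => ‖f i b‖) →
      (Summable fun b : Fin r → β => ‖∏ i, f i (b i)‖) ∧
        ∑' b : Fin r → β, ∏ i, f i (b i) = ∏ i, ∑' b, f i b
  | 0, f, _ => ⟨.of_finite, by simp⟩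
  | r + 1, f, hf => by
    obtain ⟨ih_summable, ih_tsum⟩ :=
      summable_norm_prod_and_tsum_prod (fun i => f i.succ) fun i => hf i.succ
    have hcons : ∀ p : β × (Fin r → β),
        ∏ i, f i (Fin.consEquiv (fun _ => β) p i) = f 0 p.1 * ∏ i : Fin r, f i.succ (p.2 i) :=
      fun p => Fin.prod_univ_succ _
    have hsummable := (hf 0).mul_norm ih_summable
    refine ⟨(Fin.consEquiv fun _ => β).summable_iff.mp ?_, ?_⟩
    · simpa only [Function.comp_def, hcons] using hsummable
    · rw [← (Fin.consEquiv fun _ => β).tsum_eq, tsum_congr hcons, Fin.prod_univ_succ, ← ih_tsum,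
        tsum_mul_tsum_of_summable_norm (hf 0) ih_summable]

lemma natCast_mul_add_cpow (l a k : ℕ) (hl : l ≠ 0) (z : ℂ) :
    ((l * a + k : ℕ) : ℂ) ^ z = (l : ℂ) ^ z * ((a : ℂ) + k / l) ^ z := by
  have h : ((l * a + k : ℕ) : ℂ) = ((l : ℝ) : ℂ) * (((a + k / l : ℝ)) : ℂ) := by
    push_cast
    field_simp
  rw [h, mul_cpow_ofReal_nonneg (by positivity) (by positivity)]
  push_cast
  rfl

lemma summable_norm_nat_add_cpow_neg {q : ℝ} (hq : 0 ≤ q) {t : ℂ} (ht : 1 < t.re) :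
    Summable fun a : ℕ => ‖((a : ℂ) + q) ^ (-t)‖ := by
  have hnorm : ∀ a : ℕ, ‖((a : ℂ) + q) ^ (-t)‖ = 1 / |(a : ℝ) + q| ^ t.re := fun a => by
    rw [← ofReal_natCast, ← ofReal_add, norm_cpow_eq_rpow_re_of_nonneg (by positivity)
      (by rw [neg_re]; linarith), neg_re, Real.rpow_neg (by positivity), abs_of_nonneg (by positivity),
      one_div]
  simpa only [hnorm] using (Real.summable_one_div_nat_add_rpow q t.re).mpr ht

def piFinsetIccProdEquivPiPNat (l : ℕ) [NeZero l] (ι : Type*) [Fintype ι] [DecidableEq ι] :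
    ↥(Fintype.piFinset fun _ : ι => Icc 1 l) × (ι → ℕ) ≃ (ι → ℕ+) where
  toFun p i := ⟨l * p.2 i + p.1.1 i, by
    have := Fintype.mem_piFinset.mp p.1.2 i
    simp only [mem_Icc] at this
    omega⟩
  invFun m := (⟨fun i => (m i - 1) % l + 1, Fintype.mem_piFinset.mpr fun i => by
    have := Nat.mod_lt (m i - 1) (NeZero.pos l)
    simp only [mem_Icc]
    omega⟩, fun i => (m i - 1) / l)
  left_inv p := by
    obtain ⟨⟨k, hk⟩, a⟩ := p
    have hk' : ∀ i, 1 ≤ k i ∧ k i ≤ l := fun i => mem_Icc.mp (Fintype.mem_piFinset.mp hk i)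
    ext i
    · show ((l * a i + k i - 1) % l + 1 : ℕ) = k i
      have := hk' i
      rw [Nat.add_sub_assoc this.1, Nat.mul_add_mod, Nat.mod_eq_of_lt (by omega)]
      omega
    · show (l * a i + k i - 1) / l = a i
      have := hk' i
      rw [Nat.add_sub_assoc this.1, Nat.mul_add_div (NeZero.pos l), Nat.div_eq_of_lt (by omega)]
      rfl
  right_inv m := by
    funext i
    apply PNat.eq
    have := Nat.div_add_mod (m i - 1) l
    have := (m i).pos
    simp only [PNat.mk_coe]
    omega

theorem summable_and_tsum_periodic_mul_prod_cpow_neg {l : ℕ} (hl : l ≠ 0) {g : ℕ → ℂ}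
    (hg : ∀ a b, a ≠ 0 → b ≠ 0 → a ≡ b [MOD l] → g a = g b) {r : ℕ} {t : Fin r → ℂ}
    (ht : ∀ i, 1 < (t i).re) :
    Summable (fun m : Fin r → ℕ+ => g (∏ i, (m i : ℕ)) * ∏ i, (m i : ℂ) ^ (-t i)) ∧
      ∑' m : Fin r → ℕ+, g (∏ i, (m i : ℕ)) * ∏ i, (m i : ℂ) ^ (-t i) =
        ∑ k ∈ Fintype.piFinset (fun _ : Fin r => Icc 1 l), g (∏ i, k i) *
          ∏ i, ((l : ℂ) ^ (-t i) * ∑' n' : ℕ, ((n' : ℂ) + k i / l) ^ (-t i)) := by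
  have : NeZero l := ⟨hl⟩
  set E := piFinsetIccProdEquivPiPNat l (Fin r)
  set F := fun m : Fin r → ℕ+ => g (∏ i, (m i : ℕ)) * ∏ i, (m i : ℂ) ^ (-t i)
  have hk_pos : ∀ (k : ↥(Fintype.piFinset fun _ : Fin r => Icc 1 l)) i, 0 < k.1 i := fun k i =>
    (mem_Icc.mp (Fintype.mem_piFinset.mp k.2 i)).1
  have hFE : ∀ k a, F (E (k, a)) =
      g (∏ i, k.1 i) * ∏ i, ((l * a i + k.1 i : ℕ) : ℂ) ^ (-t i) := fun k a => by
    show g (∏ i, (l * a i + k.1 i)) * _ = _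
    congr 1
    refine hg _ _ (prod_ne_zero_iff.mpr fun i _ => (E (k, a) i).ne_zero)
      (prod_ne_zero_iff.mpr fun i _ => (hk_pos k i).ne')
      (Nat.ModEq.prod fun i _ => Nat.mul_add_mod _ _ _)
  have hslice := fun k : ↥(Fintype.piFinset fun _ : Fin r => Icc 1 l) =>
    summable_norm_prod_and_tsum_prod (fun i a => ((l * a + k.1 i : ℕ) : ℂ) ^ (-t i))
      fun i => by
        simpa only [natCast_mul_add_cpow _ _ _ hl, norm_mul, ofReal_div, ofReal_natCast] using
          (summable_norm_nat_add_cpow_neg (q := k.1 i / l) (by positivity) (ht i)).mul_left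
            ‖(l : ℂ) ^ (-t i)‖
  have hsummable : Summable fun p => ‖F (E p)‖ :=
    (summable_prod_of_nonneg fun _ => norm_nonneg _).mpr ⟨fun k => by
      simpa only [hFE, norm_mul] using (hslice k).1.mul_left ‖g (∏ i, k.1 i)‖, .of_finite⟩
  refine ⟨E.summable_iff.mp hsummable.of_norm, ?_⟩
  calc ∑' m, F m = ∑' p, F (E p) := (E.tsum_eq F).symm
    _ = ∑ k : ↥(Fintype.piFinset fun _ : Fin r => Icc 1 l), ∑' a, F (E (k, a)) := by
      rw [hsummable.of_norm.tsum_prod, tsum_fintype]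
    _ = _ := by
      rw [← sum_coe_sort (Fintype.piFinset _)]
      refine Fintype.sum_congr _ _ fun k => ?_
      rw [tsum_congr (hFE k), tsum_mul_left, (hslice k).2]
      congr 1
      refine prod_congr rfl fun i _ => ?_
      rw [tsum_congr fun a => natCast_mul_add_cpow l a _ hl _, tsum_mul_left]

theorem stmt_9_general (Γ : Type*) [AddCommGroup Γ] [Finite Γ]
    (l : ℕ) (hl : l = AddMonoid.exponent Γ)
    (G : ℕ → ℕ) (hG : ∀ m, 1 ≤ m → G m = Nat.card (Γ →+ ZMod m))
    (n r : ℕ) (w : ℂ)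
    (s : Fin r → ℂ) (hs : ∀ i, 1 < (s i - (n : ℂ) * w).re) :
    Summable (fun m : Fin r → ℕ+ =>
        ((Nat.card ((Fin n → ℤ) × Γ →+ ZMod (∏ i, (m i : ℕ))) : ℂ) ^ w) *
          ∏ i, (m i : ℂ) ^ (-(s i))) ∧
    (∑' m : Fin r → ℕ+,
        ((Nat.card ((Fin n → ℤ) × Γ →+ ZMod (∏ i, (m i : ℕ))) : ℂ) ^ w) *
          ∏ i, (m i : ℂ) ^ (-(s i))) =
      ∑ k ∈ Fintype.piFinset (fun _ : Fin r => Finset.Icc 1 l),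
        ((G (∏ i, k i) : ℂ) ^ w) *
          ∏ i, ((l : ℂ) ^ (-(s i - (n : ℂ) * w)) *
            ∑' n' : ℕ, ((n' : ℂ) + (k i : ℂ) / (l : ℂ)) ^ (-(s i - (n : ℂ) * w))) := by
  have hterm : ∀ m : Fin r → ℕ+,
      ((Nat.card ((Fin n → ℤ) × Γ →+ ZMod (∏ i, (m i : ℕ))) : ℂ) ^ w) *
          ∏ i, (m i : ℂ) ^ (-(s i)) =
        (Nat.card (Γ →+ ZMod (∏ i, (m i : ℕ))) : ℂ) ^ w *
          ∏ i, (m i : ℂ) ^ (-(s i - n * w)) := fun m => by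
    rw [Nat.card_addMonoidHom_pi_int_prod, Nat.card_zmod]
    exact natCast_prod_pow_mul_cpow_mul_prod_cpow_neg (fun i => (m i).ne_zero) n _ w s
  obtain ⟨hsummable, htsum⟩ := summable_and_tsum_periodic_mul_prod_cpow_neg
    (hl ▸ AddMonoid.exponent_ne_zero_of_finite)
    (g := fun M => (Nat.card (Γ →+ ZMod M) : ℂ) ^ w)
    (fun a b ha hb hab => by rw [Nat.card_addMonoidHom_zmod_eq_of_modEq Γ ha hb (hl ▸ hab)]) hs
  refine ⟨by simpa only [hterm] using hsummable, ?_⟩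
  rw [tsum_congr hterm, htsum]
  refine sum_congr rfl fun k hk => ?_
  rw [hG _ (one_le_prod' fun i _ => (mem_Icc.mp (Fintype.mem_piFinset.mp hk i)).1)]

/-- For a finite abelian group `Γ` of exponent `l`, with
`G(m) = |Hom(Γ, ℤ/mℤ)|`, `n ≥ 0`, `r ≥ 1`, `w ∈ ℂ`, and `Re(s_i − n·w) > 1`:
`∑_{m_1,…,m_r ≥ 1} |Hom(ℤ^n × Γ, ℤ/(m_1⋯m_r)ℤ)|^w ∏_i m_i^{-s_i}
 = ∑_{k_1,…,k_r=1}^{l} G(k_1⋯k_r)^w ∏_i (l^{-(s_i−nw)} ∑_{n'≥0} (n' + k_i/l)^{-(s_i−nw)})`,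
and the left-hand tsum converges. -/
theorem stmt_9 (Γ : Type*) [AddCommGroup Γ] [Finite Γ]
    (l : ℕ) (hl : l = AddMonoid.exponent Γ)
    (G : ℕ → ℕ) (hG : ∀ m, 1 ≤ m → G m = Nat.card (Γ →+ ZMod m))
    (n r : ℕ) (hr : 1 ≤ r) (w : ℂ)
    (s : Fin r → ℂ) (hs : ∀ i, 1 < (s i - (n : ℂ) * w).re) :
    Summable (fun m : Fin r → ℕ+ =>
        ((Nat.card ((Fin n → ℤ) × Γ →+ ZMod (∏ i, (m i : ℕ))) : ℂ) ^ w) *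
          ∏ i, (m i : ℂ) ^ (-(s i))) ∧
    (∑' m : Fin r → ℕ+,
        ((Nat.card ((Fin n → ℤ) × Γ →+ ZMod (∏ i, (m i : ℕ))) : ℂ) ^ w) *
          ∏ i, (m i : ℂ) ^ (-(s i))) =
      ∑ k ∈ Fintype.piFinset (fun _ : Fin r => Finset.Icc 1 l),
        ((G (∏ i, k i) : ℂ) ^ w) *
          ∏ i, ((l : ℂ) ^ (-(s i - (n : ℂ) * w)) *
            ∑' n' : ℕ, ((n' : ℂ) + (k i : ℂ) / (l : ℂ)) ^ (-(s i - (n : ℂ) * w))) :=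
  stmt_9_general Γ l hl G hG n r w s hs
end

section
/- Let Γ be a finite abelian group, n ≥ 0 a natural number, and w a complex number. Then there exists a function F : ℂ → ℂ which is meromorphic on all of ℂ and satisfies F(s) = ∑_{m ≥ 1} |Hom(ℤ^n × Γ, ℤ/mℤ)|^w · m^{-s} for every complex s with Re(s) > n·Re(w) + 1. (This is the single-variable case of the meromorphicity in s of the deformed multivariable zeta function of Igusa type ζ^{I}_{Ab}(s; w; ℤ^n × Γ).) -/
/-!
A finite abelian group `Γ` is killed by `N = |Γ|`, so every homomorphism `Γ → ℤ/m` lands in the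
`gcd(N, m)`-torsion of `ℤ/m`, which is the image of `ℤ/gcd(N, m)` under multiplication by
`m / gcd(N, m)`. Hence `|Hom(Γ, ℤ/m)|` only depends on `m mod N`, and with `|Hom(ℤⁿ, ℤ/m)| = mⁿ`
the series is the Dirichlet series of an `N`-periodic function evaluated at `s - n w`. Its
continuation `ZMod.LFunction` is holomorphic away from `1` and has at most a simple pole at `1`.
-/

open Complex

section HomCount

variable {Γ A B C : Type*} [AddCommGroup Γ] [AddCommGroup A] [AddCommGroup B] [AddCommGroup C]

theorem natCard_addMonoidHom_prod :
    Nat.card (A × B →+ C) = Nat.card (A →+ C) * Nat.card (B →+ C) := by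
  rw [← Nat.card_prod]
  exact Nat.card_congr
    { toFun := fun f => (f.comp (AddMonoidHom.inl A B), f.comp (AddMonoidHom.inr A B))
      invFun := fun p => p.1.coprod p.2
      left_inv := AddMonoidHom.coprod_unique
      right_inv := fun p =>
        Prod.ext (AddMonoidHom.coprod_comp_inl _ _) (AddMonoidHom.coprod_comp_inr _ _) }

theorem natCard_addMonoidHom_pi_int (n : ℕ) :
    Nat.card ((Fin n → ℤ) →+ C) = Nat.card C ^ n := by
  rw [Nat.card_congr ((addMonoidHomLequivInt ℤ).trans (LinearEquiv.piRing ℤ C (Fin n) ℤ)).toEquiv,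
    Nat.card_fun, Nat.card_fin]

theorem natCard_addMonoidHom_eq_of_forall_mem_range (ι : A →+ B) (hι : Function.Injective ι)
    (hrange : ∀ (f : Γ →+ B) (x : Γ), f x ∈ ι.range) :
    Nat.card (Γ →+ A) = Nat.card (Γ →+ B) := by
  refine Nat.card_congr (Equiv.ofBijective (fun f => ι.comp f) ⟨fun f₁ f₂ h => ?_, fun f => ?_⟩)
  · ext x
    exact hι (DFunLike.congr_fun h x)
  · refine ⟨(AddMonoidHom.ofInjective hι).symm.toAddMonoidHom.comp
      (f.codRestrict ι.range (hrange f)), ?_⟩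
    ext x
    exact congrArg Subtype.val ((AddMonoidHom.ofInjective hι).apply_symm_apply ⟨f x, hrange f x⟩)

end HomCount

namespace ZMod

variable (g k : ℕ)

def mulInclusion : ZMod g →+ ZMod (g * k) :=
  ZMod.lift g ⟨zmultiplesHom _ (k : ZMod (g * k)), by simp [← Nat.cast_mul]⟩

theorem mulInclusion_natCast (x : ℕ) : mulInclusion g k x = ((x * k : ℕ) : ZMod (g * k)) := by
  rw [← Int.cast_natCast (R := ZMod g) x, mulInclusion, ZMod.lift_coe]
  simp [mul_comm]

variable {g k} [NeZero g] [NeZero k]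

theorem mulInclusion_injective : Function.Injective (mulInclusion g k) := by
  rw [injective_iff_map_eq_zero]
  intro x hx
  rw [← natCast_zmod_val x, mulInclusion_natCast, natCast_eq_zero_iff,
    Nat.mul_dvd_mul_iff_right (NeZero.pos k)] at hx
  rw [← natCast_zmod_val x, natCast_eq_zero_iff]
  exact hx

theorem mem_range_mulInclusion {y : ZMod (g * k)} (hy : g • y = 0) :
    y ∈ (mulInclusion g k).range := by
  rw [← natCast_zmod_val y, nsmul_eq_mul, ← Nat.cast_mul,
    natCast_eq_zero_iff, Nat.mul_dvd_mul_iff_left (NeZero.pos g)] at hy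
  obtain ⟨t, ht⟩ := hy
  exact ⟨t, by rw [← natCast_zmod_val y, mulInclusion_natCast, ht, Nat.mul_comm k t]⟩

end ZMod

theorem natCard_addMonoidHom_zmod_eq_gcd {Γ : Type*} [AddCommGroup Γ] {N : ℕ}
    (hN : ∀ x : Γ, N • x = 0) (m : ℕ) [NeZero m] :
    Nat.card (Γ →+ ZMod m) = Nat.card (Γ →+ ZMod (N.gcd m)) := by
  have htors (f : Γ →+ ZMod m) (x : Γ) : N.gcd m • f x = 0 := gcd_nsmul_eq_zero.mpr
    ⟨by rw [← map_nsmul, hN, map_zero], by rw [nsmul_eq_mul, ZMod.natCast_self, zero_mul]⟩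
  obtain ⟨k, hk⟩ := Nat.gcd_dvd_right N m
  have : NeZero (N.gcd m) := ⟨Nat.gcd_ne_zero_right (NeZero.ne m)⟩
  have : NeZero k := ⟨right_ne_zero_of_mul (hk ▸ NeZero.ne m)⟩
  generalize N.gcd m = g at *
  subst hk
  exact (natCard_addMonoidHom_eq_of_forall_mem_range (Γ := Γ) (ZMod.mulInclusion g k)
    ZMod.mulInclusion_injective fun f x => ZMod.mem_range_mulInclusion (htors f x)).symm

open Filter Topology in
theorem meromorphicAt_of_tendsto_sub_mul {f : ℂ → ℂ} {c a : ℂ}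
    (hf : ∀ᶠ z in 𝓝[≠] c, DifferentiableAt ℂ f z)
    (hres : Tendsto (fun z => (z - c) * f z) (𝓝[≠] c) (𝓝 a)) : MeromorphicAt f c := by
  -- `(z - c) ^ 2 * f z` extends continuously by `0` at `c`, so it is a removable singularity.
  refine ⟨2, Complex.analyticAt_of_differentiable_on_punctured_nhds_of_continuousAt ?_ ?_⟩
  · filter_upwards [hf] with z hz
    exact ((differentiableAt_id.sub_const c).pow 2).smul hz
  · rw [← continuousWithinAt_compl_self, ContinuousWithinAt]
    have := ((continuous_sub_right c).tendsto c).mono_left nhdsWithin_le_nhds |>.mul hres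
    simpa [sq, mul_assoc] using this

theorem ZMod.meromorphicOn_LFunction {N : ℕ} [NeZero N] (Φ : ZMod N → ℂ) :
    MeromorphicOn (ZMod.LFunction Φ) Set.univ := by
  intro s _
  rcases eq_or_ne s 1 with rfl | hs
  · refine meromorphicAt_of_tendsto_sub_mul ?_ (ZMod.LFunction_residue_one Φ)
    filter_upwards [self_mem_nhdsWithin] with z hz
    exact ZMod.differentiableAt_LFunction Φ z (.inl hz)
  · refine (DifferentiableOn.analyticAt (s := {1}ᶜ) (fun z hz => ?_)
      (isOpen_compl_singleton.mem_nhds hs)).meromorphicAt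
    exact (ZMod.differentiableAt_LFunction Φ z (.inl hz)).differentiableWithinAt

theorem ZMod.LFunction_eq_tsum_pnat {N : ℕ} [NeZero N] (Φ : ZMod N → ℂ) {s : ℂ} (hs : 1 < s.re) :
    ZMod.LFunction Φ s = ∑' m : ℕ+, Φ (m : ℕ) * (m : ℂ) ^ (-s) := by
  rw [ZMod.LFunction_eq_LSeries Φ hs, LSeries, ← PNat.coe_injective.tsum_eq]
  · refine tsum_congr fun m => ?_
    rw [LSeries.term_of_ne_zero m.ne_zero, cpow_neg, div_eq_mul_inv]
  · intro k hk
    exact ⟨⟨k, Nat.pos_of_ne_zero fun h => hk (h ▸ LSeries.term_zero _ _)⟩, rfl⟩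

/-- meromorphic continuation in `s` of the single-variable deformed
zeta function of Igusa type `ζ^{I}_{Ab}(s; w; ℤ^n × Γ)` for complex `w`: there is
a function `F` meromorphic on `ℂ` agreeing with the Dirichlet series
`∑_{m ≥ 1} |Hom(ℤ^n × Γ, ℤ/mℤ)|^w m^{-s}` for `Re(s) > n·Re(w) + 1`. -/
theorem stmt_13 (Γ : Type*) [AddCommGroup Γ] [Finite Γ] (n : ℕ) (w : ℂ) :
    ∃ F : ℂ → ℂ, MeromorphicOn F Set.univ ∧
      ∀ s : ℂ, (n : ℝ) * w.re + 1 < s.re →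
        F s = ∑' m : ℕ+,
          ((Nat.card ((Fin n → ℤ) × Γ →+ ZMod m) : ℂ) ^ w) * (m : ℂ) ^ (-s) := by
  set N := Nat.card Γ
  have : NeZero N := ⟨Nat.card_pos.ne'⟩
  let Φ : ZMod N → ℂ := fun j => (Nat.card (Γ →+ ZMod (N.gcd j.val)) : ℂ) ^ w
  refine ⟨fun s => ZMod.LFunction Φ (s - n * w), fun s _ => ?_, fun s hs => ?_⟩
  · exact meromorphicAt_comp_sub_const_iff_meromorphicAt.mpr
      (ZMod.meromorphicOn_LFunction Φ _ trivial)
  have hre : 1 < (s - n * w).re := by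
    simp only [sub_re, mul_re, natCast_re, natCast_im, zero_mul, sub_zero]
    linarith
  refine (ZMod.LFunction_eq_tsum_pnat Φ hre).trans (tsum_congr fun m => ?_)
  have hΦ : Φ m = (Nat.card (Γ →+ ZMod m) : ℂ) ^ w := by
    simp only [Φ]
    rw [ZMod.val_natCast, Nat.gcd_comm, ← Nat.gcd_rec,
      ← natCard_addMonoidHom_zmod_eq_gcd (fun _ => card_nsmul_eq_zero') (m : ℕ)]
  have hm : (m : ℂ) ≠ 0 := Nat.cast_ne_zero.mpr m.ne_zero
  rw [hΦ, natCard_addMonoidHom_prod, natCard_addMonoidHom_pi_int, Nat.card_zmod, Nat.cast_mul,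
    natCast_mul_natCast_cpow, Nat.cast_pow, ← natCast_cpow_natCast_mul, neg_sub, sub_eq_add_neg,
    cpow_add _ _ hm]
  ring
end

section
/- Let Γ be a finite abelian group with exponent l (the least common multiple of the orders of its elements), write G(m) := |Hom(Γ, ℤ/mℤ)| for m ≥ 1, and let n ≥ 0 and w ≥ 1 be natural numbers. Then for every complex s with Re(s) > n·w, ∑_{m ≥ 1} G(m)^w · m^{n w} · (m + 1)^{-s-1} = ∑_{j=0}^{n w} C(n w, j) · (−1)^{n w − j} · ∑_{k=1}^{l} G(k)^w · l^{-(s+1−j)} · ∑_{n' ≥ 0} (n' + (k+1)/l)^{-(s+1−j)}, where C(n w, j) is the binomial coefficient and the series on the left is a convergent tsum over positive integers m. (Note that G(m)^w · m^{n w} = |Hom(ℤ^n × Γ, ℤ/mℤ)|^w, so this expresses the series defining the deformed modified Soulé-type zeta function through Hurwitz zeta series.) -/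
/-!
Every homomorphism `Γ → ℤ/mℤ` lands in the `exp Γ`-torsion of `ℤ/mℤ`, which is cyclic of order
`gcd(m, l)`; hence `G` is `l`-periodic on the positive integers, and in particular bounded.
Expanding `m ^ (n w) = ((m + 1) - 1) ^ (n w)` binomially splits the series into the series
`∑ G(m)^w (m + 1)^(-(s + 1 - j))`, absolutely convergent because `Re (s + 1 - j) > 1`. Splitting
each of them along the residue classes `m = k + l q` and writing `k + l q + 1 = l (q + (k + 1) / l)`
turns it into a combination of Hurwitz series.
-/

open Complex Finset

theorem card_addMonoidHom_eq_card_addMonoidHom_ker_nsmul_exponent (Γ A : Type*) [AddMonoid Γ]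
    [AddCommGroup A] :
    Nat.card (Γ →+ A) = Nat.card (Γ →+ (nsmulAddMonoidHom (AddMonoid.exponent Γ) : A →+ A).ker) :=
  Nat.card_congr
    { toFun φ := φ.codRestrict _ fun x => by
        simp [← map_nsmul, AddMonoid.exponent_nsmul_eq_zero]
      invFun ψ := AddSubgroup.subtype _ |>.comp ψ
      left_inv _ := rfl
      right_inv _ := rfl }

theorem card_addMonoidHom_zmod_eq_gcd_exponent (Γ : Type*) [AddMonoid Γ] (m : ℕ) [NeZero m] :
    Nat.card (Γ →+ ZMod m) = Nat.card (Γ →+ ZMod (m.gcd (AddMonoid.exponent Γ))) := by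
  have hker := IsAddCyclic.card_nsmulAddMonoidHom_ker (ZMod m) (AddMonoid.exponent Γ)
  rw [Nat.card_zmod] at hker
  rw [card_addMonoidHom_eq_card_addMonoidHom_ker_nsmul_exponent, ← hker]
  exact Nat.card_congr
    (AddEquiv.addMonoidHomCongrRight (zmodAddCyclicAddEquiv inferInstance).symm).toEquiv

theorem card_addMonoidHom_zmod_add_exponent (Γ : Type*) [AddMonoid Γ] {m : ℕ} (hm : m ≠ 0) :
    Nat.card (Γ →+ ZMod (m + AddMonoid.exponent Γ)) = Nat.card (Γ →+ ZMod m) := by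
  have : NeZero m := ⟨hm⟩
  rw [card_addMonoidHom_zmod_eq_gcd_exponent, card_addMonoidHom_zmod_eq_gcd_exponent Γ m,
    Nat.gcd_add_self_left]

theorem Complex.summable_nat_add_cpow_neg {a : ℝ} (ha : 0 < a) {t : ℂ} (ht : 1 < t.re) :
    Summable fun n : ℕ => ((n : ℂ) + a) ^ (-t) := by
  refine Summable.of_norm ((Real.summable_one_div_nat_add_rpow a t.re).mpr ht |>.congr fun n => ?_)
  have hpos : 0 < (n : ℝ) + a := by positivity
  rw [← ofReal_natCast, ← ofReal_add, norm_cpow_eq_rpow_re_of_pos hpos, neg_re,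
    Real.rpow_neg hpos.le, abs_of_pos hpos, one_div]

theorem tsum_eq_sum_range_tsum_add_mul {R : Type*} [AddCommGroup R] [UniformSpace R]
    [IsUniformAddGroup R] [CompleteSpace R] [T0Space R] {f : ℕ → R} (hf : Summable f)
    {N : ℕ} (hN : N ≠ 0) :
    ∑' n, f n = ∑ r ∈ range N, ∑' q, f (r + N * q) := by
  obtain ⟨N, rfl⟩ := Nat.exists_eq_succ_of_ne_zero hN
  rw [Nat.sumByResidueClasses hf (N + 1)]
  exact Fin.sum_univ_eq_sum_range (fun r => ∑' q, f (r + (N + 1) * q)) (N + 1)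

theorem hasSum_periodic_mul_nat_add_cpow {b : ℕ → ℂ} {l : ℕ} (hb : Function.Periodic b l)
    (hl : l ≠ 0) {c : ℝ} (hc : 0 < c) {t : ℂ} (ht : 1 < t.re) :
    HasSum (fun n : ℕ => b n * ((n : ℂ) + c) ^ (-t))
      (∑ r ∈ range l, b r * (l : ℂ) ^ (-t) * ∑' q : ℕ, ((q : ℂ) + (r + c) / l) ^ (-t)) := by
  have hbound : ∀ n, ‖b n‖ ≤ ∑ r ∈ range l, ‖b r‖ := fun n => by
    rw [← hb.map_mod_nat n]
    exact single_le_sum (fun r _ => norm_nonneg (b r)) (mem_range.mpr (Nat.mod_lt n (by omega)))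
  have hsum : Summable fun n : ℕ => b n * ((n : ℂ) + c) ^ (-t) :=
    .of_norm_bounded ((summable_nat_add_cpow_neg hc ht).norm.mul_left _) fun n => by
      rw [norm_mul]
      exact mul_le_mul_of_nonneg_right (hbound n) (norm_nonneg _)
  have hclass : ∀ r q : ℕ, b (r + l * q) * ((↑(r + l * q) : ℂ) + c) ^ (-t) =
      b r * (l : ℂ) ^ (-t) * ((q : ℂ) + (r + c) / l) ^ (-t) := fun r q => by
    have hl' : (0 : ℝ) < l := by positivity
    have hsplit : (↑(r + l * q) : ℂ) + c = (l : ℝ) * ((q + (r + c) / l : ℝ) : ℂ) := by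
      push_cast
      field_simp
      ring
    have hbq : b (r + l * q) = b r := by simpa [mul_comm] using hb.nat_mul q r
    rw [hbq, hsplit, mul_cpow_ofReal_nonneg hl'.le (by positivity), ofReal_natCast, mul_assoc]
    push_cast
    rfl
  rw [hsum.hasSum_iff, tsum_eq_sum_range_tsum_add_mul hsum hl]
  exact sum_congr rfl fun r _ => by simp_rw [hclass, tsum_mul_left]

theorem hasSum_pnat_mul_cpow_of_periodic {a : ℕ → ℂ} {l : ℕ}
    (ha : Function.Periodic (fun n => a (n + 1)) l) (hl : l ≠ 0) {t : ℂ} (ht : 1 < t.re) :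
    HasSum (fun m : ℕ+ => a m * ((m : ℂ) + 1) ^ (-t))
      (∑ k ∈ Icc 1 l, a k * (l : ℂ) ^ (-t) * ∑' q : ℕ, ((q : ℂ) + (k + 1) / l) ^ (-t)) := by
  rw [← Equiv.pnatEquivNat.symm.hasSum_iff, ← Ico_add_one_right_eq_Icc, sum_Ico_eq_sum_range,
    Nat.add_sub_cancel]
  convert hasSum_periodic_mul_nat_add_cpow ha hl two_pos ht using 1
  · ext n
    simp only [Function.comp_apply, Equiv.pnatEquivNat_symm_apply, Nat.succPNat_coe]
    push_cast
    rw [add_assoc, one_add_one_eq_two]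
  · refine sum_congr rfl fun r _ => ?_
    rw [add_comm 1 r]
    push_cast
    rw [add_assoc (r : ℂ), one_add_one_eq_two]

theorem pow_mul_add_one_cpow_eq_sum (x s : ℂ) (hx : x + 1 ≠ 0) (N : ℕ) :
    x ^ N * (x + 1) ^ (-s - 1) = ∑ j ∈ range (N + 1),
      (N.choose j : ℂ) * (-1) ^ (N - j) * (x + 1) ^ (-(s + 1 - j)) := by
  have hbinom := add_pow (x + 1) (-1) N
  rw [add_neg_cancel_right] at hbinom
  rw [hbinom, sum_mul]
  refine sum_congr rfl fun j _ => ?_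
  rw [show -(s + 1 - j) = -s - 1 + j by ring, cpow_add _ _ hx, cpow_natCast]
  ring

theorem stmt_14_general (Γ : Type*) [AddCommGroup Γ] [Finite Γ]
    (l : ℕ) (hl : l = AddMonoid.exponent Γ)
    (G : ℕ → ℕ) (hG : ∀ m, 1 ≤ m → G m = Nat.card (Γ →+ ZMod m))
    (n w : ℕ)
    (s : ℂ) (hs : (n * w : ℝ) < s.re) :
    Summable (fun m : ℕ+ =>
        (G m : ℂ) ^ w * (m : ℂ) ^ (n * w) * ((m : ℂ) + 1) ^ (-s - 1)) ∧
    (∑' m : ℕ+, (G m : ℂ) ^ w * (m : ℂ) ^ (n * w) * ((m : ℂ) + 1) ^ (-s - 1)) =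
      ∑ j ∈ Finset.range (n * w + 1),
        (Nat.choose (n * w) j : ℂ) * (-1 : ℂ) ^ (n * w - j) *
          ∑ k ∈ Finset.Icc 1 l,
            (G k : ℂ) ^ w * (l : ℂ) ^ (-(s + 1 - (j : ℂ))) *
              ∑' n' : ℕ,
                ((n' : ℂ) + ((k : ℂ) + 1) / (l : ℂ)) ^ (-(s + 1 - (j : ℂ))) := by
  have hl0 : l ≠ 0 := hl ▸ AddMonoid.exponent_ne_zero_of_finite
  have hper : Function.Periodic (fun m => (G (m + 1) : ℂ) ^ w) l := fun m => by
    show (G (m + l + 1) : ℂ) ^ w = (G (m + 1) : ℂ) ^ w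
    rw [add_right_comm, hG _ (by omega), hG _ (by omega), hl,
      card_addMonoidHom_zmod_add_exponent Γ m.succ_ne_zero]
  have hre : ∀ j ∈ range (n * w + 1), 1 < (s + 1 - j).re := fun j hj => by
    have : (j : ℝ) ≤ n * w := by exact_mod_cast Nat.lt_succ_iff.mp (mem_range.mp hj)
    simp only [sub_re, add_re, one_re, natCast_re]
    linarith
  have hsum := hasSum_sum fun j hj =>
    (hasSum_pnat_mul_cpow_of_periodic (a := fun m => (G m : ℂ) ^ w) hper hl0 (hre j hj)).mul_left
      ((n * w).choose j * (-1 : ℂ) ^ (n * w - j))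
  refine ⟨hsum.summable.congr fun m => ?_, hsum.tsum_eq ▸ tsum_congr fun m => ?_⟩ <;>
  · rw [mul_assoc, pow_mul_add_one_cpow_eq_sum _ _ (Nat.cast_add_one_ne_zero (m : ℕ)), mul_sum]
    exact sum_congr rfl fun j _ => by ring

/-- for a finite abelian group `Γ` of exponent `l`, with
`G(m) = |Hom(Γ, ℤ/mℤ)|`, `n ≥ 0`, `w ≥ 1`, and `Re(s) > n·w`:
`∑_{m ≥ 1} G(m)^w m^{nw} (m+1)^{-s-1}
 = ∑_{j=0}^{nw} C(nw, j)(−1)^{nw−j} ∑_{k=1}^{l} G(k)^w l^{-(s+1−j)}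
     ∑_{n'≥0} (n' + (k+1)/l)^{-(s+1−j)}`,
with the left-hand tsum convergent. -/
theorem stmt_14 (Γ : Type*) [AddCommGroup Γ] [Finite Γ]
    (l : ℕ) (hl : l = AddMonoid.exponent Γ)
    (G : ℕ → ℕ) (hG : ∀ m, 1 ≤ m → G m = Nat.card (Γ →+ ZMod m))
    (n w : ℕ) (hw : 1 ≤ w)
    (s : ℂ) (hs : (n * w : ℝ) < s.re) :
    Summable (fun m : ℕ+ =>
        (G m : ℂ) ^ w * (m : ℂ) ^ (n * w) * ((m : ℂ) + 1) ^ (-s - 1)) ∧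
    (∑' m : ℕ+, (G m : ℂ) ^ w * (m : ℂ) ^ (n * w) * ((m : ℂ) + 1) ^ (-s - 1)) =
      ∑ j ∈ Finset.range (n * w + 1),
        (Nat.choose (n * w) j : ℂ) * (-1 : ℂ) ^ (n * w - j) *
          ∑ k ∈ Finset.Icc 1 l,
            (G k : ℂ) ^ w * (l : ℂ) ^ (-(s + 1 - (j : ℂ))) *
              ∑' n' : ℕ,
                ((n' : ℂ) + ((k : ℂ) + 1) / (l : ℂ)) ^ (-(s + 1 - (j : ℂ))) :=
  stmt_14_general Γ l hl G hG n w s hs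
end
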